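/- arXiv:2509.06226 — 2 statements merged into one kernel-verified Lean document; each statement's English description precedes it below -/
import Mathlib

section
/- Let $R$ be a commutative local ring and let $f = \sum_{i \leq k} a_i z^i$ be a nonzero element of the ring $R((z^{-1}))$ of formal Laurent series in $z^{-1}$ (finitely many positive powers of $z$, arbitrary negative powers). Then $f$ is invertible in $R((z^{-1}))$ if and only if there exists $l \leq k$ such that $a_l$ is a unit of $R$ and $a_i$ is nilpotent for all $i > l$. -/
/-!
If `f` is a unit, reduce it modulo the maximal ideal: the order `l` of its image in `k((t))`
gives a unit coefficient `a_l` and non-unit coefficients below it. For a prime `P`, the image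
of `f` in `(R ⧸ P)((t))` is a unit over a domain, so its leading coefficient is a unit; since
`R → R ⧸ P` is a local homomorphism, the coefficients below `l` must vanish modulo `P`. Lying
in every prime, they are nilpotent.

Conversely, `f` is the sum of its truncation below `l`, a finite sum of nilpotent monomials,
and of a series whose lowest coefficient `a_l` is a unit, which is therefore a unit.
-/

open HahnSeries

namespace HahnSeries

variable {Γ R S : Type*}

theorem isUnit_map [AddCommMonoid Γ] [PartialOrder Γ] [IsOrderedCancelAddMonoid Γ] [Semiring R]
    [Semiring S] {x : R⟦Γ⟧} (hx : IsUnit x) (f : R →+* S) : IsUnit (x.map f) := by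
  have map_mul' (y z : R⟦Γ⟧) : (y * z).map f = (y.map f : S⟦Γ⟧) * z.map f :=
    HahnSeries.map_mul (f : R →ₙ+* S)
  have map_one' : (1 : R⟦Γ⟧).map f = 1 := HahnSeries.map_one f.toMonoidWithZeroHom
  obtain ⟨u, rfl⟩ := hx
  exact ⟨⟨(u : R⟦Γ⟧).map f, (↑u⁻¹ : R⟦Γ⟧).map f,
    by rw [← map_mul', u.mul_inv, map_one'], by rw [← map_mul', u.inv_mul, map_one']⟩, rfl⟩

theorem order_eq_of_coeff_ne_zero_of_forall_lt [Zero Γ] [LinearOrder Γ] [Zero R] {x : R⟦Γ⟧}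
    {l : Γ} (hl : x.coeff l ≠ 0) (hlt : ∀ i < l, x.coeff i = 0) : x.order = l := by
  have hx : x ≠ 0 := by rintro rfl; exact hl rfl
  refine le_antisymm (order_le_of_coeff_ne_zero hl) (not_lt.mp fun h => ?_)
  exact coeff_order_eq_zero.not.mpr hx (hlt _ h)

theorem eq_sum_single_of_support_subset [PartialOrder Γ] [AddCommMonoid R] {x : R⟦Γ⟧}
    {s : Finset Γ} (hs : x.support ⊆ s) : x = ∑ i ∈ s, single i (x.coeff i) := by
  classical
  ext j
  simp only [coeff_sum, coeff_single, Finset.sum_ite_eq]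
  split_ifs with hj
  · rfl
  · by_contra hx
    exact hj (hs ((mem_support x j).mpr hx))

theorem isNilpotent_of_support_subset [AddCommMonoid Γ] [PartialOrder Γ]
    [IsOrderedCancelAddMonoid Γ] [CommRing R] {x : R⟦Γ⟧} {s : Finset Γ} (hs : x.support ⊆ s)
    (hx : ∀ i ∈ s, IsNilpotent (x.coeff i)) : IsNilpotent x := by
  rw [eq_sum_single_of_support_subset hs]
  refine isNilpotent_sum fun i hi => ?_
  obtain ⟨n, hn⟩ := hx i hi
  exact ⟨n, by rw [single_pow, hn, single_eq_zero]⟩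

section OrderedGroup

variable [AddCommGroup Γ] [LinearOrder Γ] [IsOrderedAddMonoid Γ] [CommRing R]

theorem isUnit_of_isUnit_coeff_of_forall_lt {x : R⟦Γ⟧} {l : Γ} (hl : IsUnit (x.coeff l))
    (hlt : ∀ i < l, x.coeff i = 0) : IsUnit x := by
  nontriviality R
  refine isUnit_of_isUnit_leadingCoeff_AddUnitOrder ?_ (AddGroup.isAddUnit _)
  rwa [leadingCoeff_eq, order_eq_of_coeff_ne_zero_of_forall_lt hl.ne_zero hlt]

theorem le_order_of_isUnit [IsDomain R] {x : R⟦Γ⟧} (hx : IsUnit x) {l : Γ}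
    (hl : ∀ i < l, ¬IsUnit (x.coeff i)) : l ≤ x.order := by
  by_contra! hlt
  exact hl _ hlt (leadingCoeff_eq (x := x) ▸ isUnit_iff.mp hx)

theorem isNilpotent_coeff_of_isUnit [IsLocalRing R] {x : R⟦Γ⟧} (hx : IsUnit x) {l : Γ}
    (hl : ∀ i < l, ¬IsUnit (x.coeff i)) {j : Γ} (hj : j < l) : IsNilpotent (x.coeff j) := by
  refine nilpotent_iff_mem_prime.mpr fun P hP => ?_
  have : IsLocalHom (Ideal.Quotient.mk P) := isLocalHom_of_le_jacobson_bot P <|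
    (IsLocalRing.le_maximalIdeal hP.ne_top).trans
      (IsLocalRing.jacobson_eq_maximalIdeal ⊥ bot_ne_top).ge
  have hle : l ≤ (x.map (Ideal.Quotient.mk P)).order :=
    le_order_of_isUnit (isUnit_map hx _) fun i hi hunit => hl i hi (isUnit_of_map_unit _ _ hunit)
  exact Ideal.Quotient.eq_zero_iff_mem.mp (coeff_eq_zero_of_lt_order (hj.trans_le hle))

end OrderedGroup

end HahnSeries

namespace LaurentSeries

variable {R : Type*} [CommRing R]

theorem isNilpotent_truncLT {f : LaurentSeries R} {l : ℤ}
    (hf : ∀ j < l, IsNilpotent (f.coeff j)) : IsNilpotent (truncLT l f) := by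
  refine isNilpotent_of_support_subset (s := Finset.Ico f.order l) (fun i hi => ?_) fun i hi => ?_
  · have hi' : i < l ∧ f.coeff i ≠ 0 := by simpa [support_truncLT, and_comm] using hi
    exact Finset.mem_Ico.mpr ⟨order_le_of_coeff_ne_zero hi'.2, hi'.1⟩
  · have hil : i < l := (Finset.mem_Ico.mp hi).2
    rw [HahnSeries.coeff_truncLT, if_pos hil]
    exact hf i hil

theorem isUnit_of_isUnit_coeff_of_isNilpotent {f : LaurentSeries R} {l : ℤ}
    (hl : IsUnit (f.coeff l)) (hf : ∀ j < l, IsNilpotent (f.coeff j)) : IsUnit f := by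
  have hunit : IsUnit (f - truncLT l f) := by
    refine isUnit_of_isUnit_coeff_of_forall_lt (l := l) ?_ fun i hi => ?_
    · simpa [HahnSeries.coeff_truncLT] using hl
    · simp [HahnSeries.coeff_truncLT, hi]
  simpa using (isNilpotent_truncLT hf).isUnit_add_left_of_commute hunit (Commute.all _ _)

end LaurentSeries

theorem statement7_general {R : Type*} [CommRing R] [IsLocalRing R]
    (f : LaurentSeries R) :
    IsUnit f ↔ ∃ l : ℤ, IsUnit (f.coeff l) ∧ ∀ j < l, IsNilpotent (f.coeff j) := by
  refine ⟨fun hf => ?_, fun ⟨l, hl, hnil⟩ =>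
    LaurentSeries.isUnit_of_isUnit_coeff_of_isNilpotent hl hnil⟩
  set fbar := f.map (IsLocalRing.residue R)
  have hcoeff : IsUnit (f.coeff fbar.order) := (IsLocalRing.residue_ne_zero_iff_isUnit _).mp <|
    coeff_order_eq_zero.not.mpr (isUnit_map hf _).ne_zero
  have hbelow (i : ℤ) (hi : i < fbar.order) : ¬IsUnit (f.coeff i) :=
    fun hunit => (IsLocalRing.residue_ne_zero_iff_isUnit _).mpr hunit (coeff_eq_zero_of_lt_order hi)
  exact ⟨fbar.order, hcoeff, fun j hj => isNilpotent_coeff_of_isUnit hf hbelow hj⟩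

/-- Let `R` be a commutative local ring and `f` a nonzero element of the
ring `R((z⁻¹))` of formal Laurent series in `z⁻¹` (finitely many positive powers of `z`).
Writing `t = z⁻¹`, this ring is the Laurent series ring `R((t))`, with the coefficient of
`z^i` being the coefficient of `t^{-i}`.  Then `f` is invertible iff there exists an index
`l` (in `t`-exponents) such that the coefficient of `t^l` is a unit of `R` and all
coefficients of `t^j` for `j < l` (i.e. all `z`-coefficients above the unit one) are
nilpotent. -/
theorem statement7 {R : Type*} [CommRing R] [IsLocalRing R]
    (f : LaurentSeries R) (hf : f ≠ 0) :
    IsUnit f ↔ ∃ l : ℤ, IsUnit (f.coeff l) ∧ ∀ j < l, IsNilpotent (f.coeff j) :=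
  statement7_general f
end

section
/- Let $\Lambda$ be an abelian group (written additively) and let $H$ be a commutative ring equipped with a group homomorphism $\lambda \mapsto s_\lambda$ from $\Lambda$ to the group of ring automorphisms of $H$. Suppose given elements $e(\lambda) \in H$ for $\lambda \in \Lambda$, nonzerodivisors, such that the free left $H$-module $\mathcal{A}$ with basis $\{r_\lambda\}_{\lambda \in \Lambda}$ carries an associative product determined by $r_\lambda \cdot x = s_\lambda(x) r_\lambda$ for $x \in H$ and $r_\lambda \cdot r_\mu = \frac{e(\lambda)\, s_\lambda(e(\mu))}{e(\lambda+\mu)} \, r_{\lambda+\mu}$ (assuming $e(\lambda+\mu)$ divides $e(\lambda)s_\lambda(e(\mu))$ in $H$). Let $(K, E(\lambda), S_\lambda)$ be analogous data defining an algebra $\mathcal{A}^\times$ over $K$ with basis $\{r_\lambda^\times\}$. Suppose $\mathrm{ch}\colon K \to H$ is a ring homomorphism satisfying $\mathrm{ch} \circ S_\lambda = s_\lambda \circ \mathrm{ch}$ for all $\lambda$, and there exist invertible elements $T(\lambda) \in H$ with $\mathrm{ch}(E(\lambda)) = T(\lambda)^{-1} e(\lambda)$ and $T(\lambda+\mu)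 = T(\lambda) \cdot s_\lambda(T(\mu))$ for all $\lambda, \mu$. Then the map $\Upsilon\colon \mathcal{A}^\times \to \mathcal{A}$ defined by $\Upsilon(x \cdot r_\lambda^\times) = \mathrm{ch}(x)\, T(\lambda)^{-1}\, r_\lambda$ for $x \in K$ is a ring homomorphism. -/
/-- The "Coulomb branch" type product on the free module `Λ →₀ H` with basis `{r_λ}`,
determined by `r_λ · x = s_λ(x) r_λ` and `r_λ · r_μ = c(λ,μ) r_{λ+μ}`, where
`c(λ,μ) = e(λ) s_λ(e(μ)) / e(λ+μ)` is the structure constant: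
`(x r_λ) · (y r_μ) = x · s_λ(y) · c(λ,μ) · r_{λ+μ}`. -/
noncomputable def coulombMul {Λ H : Type*} [AddCommGroup Λ] [CommRing H]
    (s : Λ → H ≃+* H) (c : Λ → Λ → H) (f g : Λ →₀ H) : Λ →₀ H :=
  f.sum fun l x => g.sum fun m y => Finsupp.single (l + m) (x * s l y * c l m)

/-- The comparison map `Υ : 𝒜^× → 𝒜`, `x · r_λ^× ↦ ch(x) · T(λ)⁻¹ · r_λ`. -/
noncomputable def upsilonMap {Λ H K : Type*} [AddCommGroup Λ] [CommRing H] [CommRing K]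
    (ch : K →+* H) (T : Λ → Hˣ) (f : Λ →₀ K) : Λ →₀ H :=
  f.sum fun l x => Finsupp.single l (ch x * ((T l)⁻¹ : Hˣ))

/-! Both products and `Υ` are additive in each argument, so it suffices to compare them on
basis elements `x r_λ^×`, `y r_μ^×`. There the two sides differ only in the structure
constants and in the factors `T(λ)⁻¹ s_λ(T(μ)⁻¹)` versus `T(λ+μ)⁻¹`. The cocycle identity
for `T` makes the latter agree, and together with `e(λ) = T(λ) ch(E(λ))` it gives
`ch(C(λ,μ)) e(λ+μ) = e(λ) s_λ(e(μ)) = c(λ,μ) e(λ+μ)`, so `ch(C(λ,μ)) = c(λ,μ)` after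
cancelling the nonzerodivisor `e(λ+μ)`. -/

open Finsupp

section CoulombMul

variable {Λ R : Type*} [AddCommGroup Λ] [CommRing R] (σ : Λ → R ≃+* R) (γ : Λ → Λ → R)

theorem coulombMul_single_single (l m : Λ) (x y : R) :
    coulombMul σ γ (single l x) (single m y) = single (l + m) (x * σ l y * γ l m) := by
  rw [coulombMul, sum_single_index (by simp), sum_single_index (by simp)]

theorem coulombMul_zero_left (g : Λ →₀ R) : coulombMul σ γ 0 g = 0 :=
  sum_zero_index

theorem coulombMul_zero_right (f : Λ →₀ R) : coulombMul σ γ f 0 = 0 := by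
  simp only [coulombMul, sum_zero_index, sum_fun_zero]

theorem coulombMul_add_left (f f' g : Λ →₀ R) :
    coulombMul σ γ (f + f') g = coulombMul σ γ f g + coulombMul σ γ f' g := by
  refine sum_add_index' (fun l => by simp) fun l x x' => ?_
  simp only [add_mul, single_add, sum_add]

theorem coulombMul_add_right (f g g' : Λ →₀ R) :
    coulombMul σ γ f (g + g') = coulombMul σ γ f g + coulombMul σ γ f g' := by
  rw [coulombMul, coulombMul, coulombMul, ← sum_add]
  congr 1; funext l x
  exact sum_add_index' (fun m => by simp) fun m y y' => by
    rw [map_add, mul_add, add_mul, single_add]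

end CoulombMul

theorem map_coulombMul_of_map_single {Λ H K : Type*} [AddCommGroup Λ] [CommRing H]
    [CommRing K] {s : Λ → H ≃+* H} {c : Λ → Λ → H} {S : Λ → K ≃+* K} {C : Λ → Λ → K}
    (U : (Λ →₀ K) →+ (Λ →₀ H))
    (hU : ∀ l m x y, U (coulombMul S C (single l x) (single m y)) =
      coulombMul s c (U (single l x)) (U (single m y)))
    (f g : Λ →₀ K) : U (coulombMul S C f g) = coulombMul s c (U f) (U g) := by
  induction f using Finsupp.induction_linear with
  | zero => simp only [coulombMul_zero_left, map_zero]
  | add f f' hf hf' => simp only [coulombMul_add_left, map_add, hf, hf']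
  | single l x =>
    induction g using Finsupp.induction_linear with
    | zero => simp only [coulombMul_zero_right, map_zero]
    | add g g' hg hg' => simp only [coulombMul_add_right, map_add, hg, hg']
    | single m y => exact hU l m x y

theorem coe_inv_add_of_cocycle {Λ M F : Type*} [AddMonoid Λ] [CommMonoid M] [FunLike F M M]
    [MonoidHomClass F M M] (s : Λ → F) (T : Λ → Mˣ)
    (hTc : ∀ l m, (T (l + m) : M) = T l * s l (T m)) (l m : Λ) :
    (↑(T (l + m))⁻¹ : M) = ↑(T l)⁻¹ * s l ↑(T m)⁻¹ := by
  refine Units.inv_eq_of_mul_eq_one_right ?_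
  calc (T (l + m) : M) * (↑(T l)⁻¹ * s l ↑(T m)⁻¹)
      = (T l * ↑(T l)⁻¹ : M) * s l (T m * ↑(T m)⁻¹ : M) := by
        rw [hTc, map_mul]; ac_rfl
    _ = 1 := by simp

theorem cocycle_zero_eq_one {Λ M F : Type*} [AddMonoid Λ] [Monoid M] [FunLike F M M]
    (s : Λ → F) (T : Λ → Mˣ) (hs0 : ∀ x, s 0 x = x)
    (hTc : ∀ l m, (T (l + m) : M) = T l * s l (T m)) : T 0 = 1 := by
  refine (left_eq_mul (a := T 0)).mp (Units.ext ?_)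
  calc (T 0 : M) = T (0 + 0) := by rw [add_zero]
    _ = T 0 * T 0 := by rw [hTc, hs0]

section Upsilon

variable {Λ H K : Type*} [AddCommGroup Λ] [CommRing H] [CommRing K] (ch : K →+* H)
  (T : Λ → Hˣ)

theorem upsilonMap_single (l : Λ) (x : K) :
    upsilonMap ch T (single l x) = single l (ch x * ↑(T l)⁻¹) :=
  sum_single_index (by simp)

theorem upsilonMap_add (f g : Λ →₀ K) :
    upsilonMap ch T (f + g) = upsilonMap ch T f + upsilonMap ch T g :=
  sum_add_index' (fun l => by simp) fun l x y => by rw [map_add, add_mul, single_add]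

noncomputable def upsilonAddHom : (Λ →₀ K) →+ (Λ →₀ H) :=
  AddMonoidHom.mk' (upsilonMap ch T) (upsilonMap_add ch T)

variable {ch T} {s : Λ → H ≃+* H} {c : Λ → Λ → H} {S : Λ → K ≃+* K} {C : Λ → Λ → K}

theorem map_structureConst_eq {e : Λ → H} {E : Λ → K} (he : ∀ l, e l ∈ nonZeroDivisors H)
    (hc : ∀ l m, c l m * e (l + m) = e l * s l (e m))
    (hC : ∀ l m, C l m * E (l + m) = E l * S l (E m))
    (hch : ∀ l x, ch (S l x) = s l (ch x)) (hT : ∀ l, ch (E l) = ↑(T l)⁻¹ * e l)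
    (hTc : ∀ l m, (T (l + m) : H) = T l * s l (T m)) (l m : Λ) :
    ch (C l m) = c l m := by
  have he_eq : ∀ l, e l = T l * ch (E l) := fun l => by
    rw [hT, Units.mul_inv_cancel_left]
  refine (mul_cancel_right_mem_nonZeroDivisors (he (l + m))).mp ?_
  calc ch (C l m) * e (l + m) = T (l + m) * ch (C l m * E (l + m)) := by
        rw [he_eq, map_mul]; ring
    _ = T l * ch (E l) * s l (T m * ch (E m)) := by
        rw [hC, map_mul, hch, hTc, map_mul]; ring
    _ = c l m * e (l + m) := by rw [← he_eq, ← he_eq, hc]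

theorem upsilonMap_coulombMul_single (hch : ∀ l x, ch (S l x) = s l (ch x))
    (hTc : ∀ l m, (T (l + m) : H) = T l * s l (T m)) (hchC : ∀ l m, ch (C l m) = c l m)
    (l m : Λ) (x y : K) :
    upsilonMap ch T (coulombMul S C (single l x) (single m y)) =
      coulombMul s c (upsilonMap ch T (single l x)) (upsilonMap ch T (single m y)) := by
  simp only [coulombMul_single_single, upsilonMap_single, coe_inv_add_of_cocycle s T hTc,
    map_mul, hch, hchC]
  congr 1
  ring

end Upsilon

theorem statement14_general {Λ H K : Type*} [AddCommGroup Λ] [CommRing H] [CommRing K]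
    (s : Λ → H ≃+* H) (hs0 : s 0 = RingEquiv.refl H)
    (e : Λ → H) (he : ∀ l, e l ∈ nonZeroDivisors H)
    (c : Λ → Λ → H) (hc : ∀ l m, c l m * e (l + m) = e l * s l (e m))
    (S : Λ → K ≃+* K)
    (E : Λ → K)
    (C : Λ → Λ → K) (hC : ∀ l m, C l m * E (l + m) = E l * S l (E m))
    (ch : K →+* H) (hch : ∀ l x, ch (S l x) = s l (ch x))
    (T : Λ → Hˣ) (hT : ∀ l, ch (E l) = ((T l)⁻¹ : Hˣ) * e l)
    (hTc : ∀ l m, (T (l + m) : H) = (T l : H) * s l (T m : H)) :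
    (∀ f g : Λ →₀ K, upsilonMap ch T (f + g) = upsilonMap ch T f + upsilonMap ch T g) ∧
    (∀ f g : Λ →₀ K,
      upsilonMap ch T (coulombMul S C f g) =
        coulombMul s c (upsilonMap ch T f) (upsilonMap ch T g)) ∧
    upsilonMap ch T (Finsupp.single 0 1) = Finsupp.single 0 1 := by
  have hchC := map_structureConst_eq he hc hC hch hT hTc
  have hT0 : T 0 = 1 := cocycle_zero_eq_one s T (fun x => by rw [hs0]; rfl) hTc
  refine ⟨upsilonMap_add ch T,
    map_coulombMul_of_map_single (upsilonAddHom ch T)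
      (upsilonMap_coulombMul_single hch hTc hchC), ?_⟩
  rw [upsilonMap_single, hT0, map_one, inv_one, Units.val_one, mul_one]

/-- Let `Λ` be an abelian group, `H` a commutative ring with a
homomorphism `λ ↦ s_λ` from `Λ` to ring automorphisms of `H`, nonzerodivisors
`e(λ) ∈ H`, and structure constants `c(λ,μ)` with `c(λ,μ)·e(λ+μ) = e(λ)·s_λ(e(μ))`,
defining the product `coulombMul s c` on the free `H`-module `𝒜 = Λ →₀ H` with basis
`{r_λ}` (so `r_λ x = s_λ(x) r_λ` and `r_λ r_μ = (e(λ)s_λ(e(μ))/e(λ+μ)) r_{λ+μ}`).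
Let `(K, S, E, C)` be analogous data defining `𝒜^× = Λ →₀ K`.  Suppose `ch : K → H` is
a ring homomorphism with `ch ∘ S_λ = s_λ ∘ ch`, and `T(λ) ∈ H^×` are invertible elements
with `ch(E(λ)) = T(λ)⁻¹ e(λ)` and `T(λ+μ) = T(λ) · s_λ(T(μ))`.  Then the map
`Υ : 𝒜^× → 𝒜`, `x r_λ^× ↦ ch(x) T(λ)⁻¹ r_λ`, is a ring homomorphism: it is additive,
multiplicative, and sends `1·r_0^×` to `1·r_0`. -/
theorem statement14 {Λ H K : Type*} [AddCommGroup Λ] [CommRing H] [CommRing K]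
    (s : Λ → H ≃+* H) (hs0 : s 0 = RingEquiv.refl H)
    (hsadd : ∀ l m x, s (l + m) x = s l (s m x))
    (e : Λ → H) (he : ∀ l, e l ∈ nonZeroDivisors H)
    (c : Λ → Λ → H) (hc : ∀ l m, c l m * e (l + m) = e l * s l (e m))
    (S : Λ → K ≃+* K) (hS0 : S 0 = RingEquiv.refl K)
    (hSadd : ∀ l m x, S (l + m) x = S l (S m x))
    (E : Λ → K) (hE : ∀ l, E l ∈ nonZeroDivisors K)
    (C : Λ → Λ → K) (hC : ∀ l m, C l m * E (l + m) = E l * S l (E m))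
    (ch : K →+* H) (hch : ∀ l x, ch (S l x) = s l (ch x))
    (T : Λ → Hˣ) (hT : ∀ l, ch (E l) = ((T l)⁻¹ : Hˣ) * e l)
    (hTc : ∀ l m, (T (l + m) : H) = (T l : H) * s l (T m : H)) :
    (∀ f g : Λ →₀ K, upsilonMap ch T (f + g) = upsilonMap ch T f + upsilonMap ch T g) ∧
    (∀ f g : Λ →₀ K,
      upsilonMap ch T (coulombMul S C f g) =
        coulombMul s c (upsilonMap ch T f) (upsilonMap ch T g)) ∧
    upsilonMap ch T (Finsupp.single 0 1) = Finsupp.single 0 1 :=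
  statement14_general s hs0 e he c hc S E C hC ch hch T hT hTc
end
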